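/- Let Y be a real random variable with continuous strictly increasing CDF F and τ ∈ (0,1). Then q minimizes θ ↦ E[ρ_τ(Y − θ) − ρ_τ(Y)] over ℝ if and only if F(q) = τ, where ρ_τ(u) = u(τ − 1(u<0)). -/

import Mathlib

/-!
`ρ_τ(u) = τu + max(-u, 0)` is convex, with `τ - 1(u ≤ 0)` a subgradient at `u`. Choosing
`1(u ≤ 0)` rather than `1(u < 0)` puts `F(b) = P(Y ≤ b)` itself, not `P(Y < b)`, into the bound
obtained by integrating the subgradient inequality: `G(θ) = E[ρ_τ(Y − θ) − ρ_τ(Y)]` satisfies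
`G(a) − G(b) ≥ (τ − F(b))(b − a)`. If `F(q) = τ` this says `q` minimizes `G`; conversely, at a
minimizer `q` the bound forces `F(θ) ≥ τ` for `θ > q` and `F(θ) ≤ τ` for `θ < q`, so `F(q) = τ`
by continuity.
-/

open MeasureTheory Filter Topology

/-- The Koenker–Bassett quantile check function `ρ_τ(u) = u(τ − 1(u < 0))`. -/
noncomputable def checkFun (τ u : ℝ) : ℝ := u * (τ - if u < 0 then 1 else 0)

lemma checkFun_sub_ge (τ u v : ℝ) :
    (τ - if u ≤ 0 then 1 else 0) * (v - u) ≤ checkFun τ v - checkFun τ u := by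
  unfold checkFun
  split_ifs <;> nlinarith

lemma integral_checkFun_sub_ge {Ω : Type*} [MeasurableSpace Ω] (P : Measure Ω)
    [IsProbabilityMeasure P] {Y : Ω → ℝ} (hY : Measurable Y) {τ a b : ℝ}
    (ha : Integrable (fun ω => checkFun τ (Y ω - a) - checkFun τ (Y ω)) P)
    (hb : Integrable (fun ω => checkFun τ (Y ω - b) - checkFun τ (Y ω)) P) :
    (τ - P.real {ω | Y ω ≤ b}) * (b - a) ≤
      (∫ ω, (checkFun τ (Y ω - a) - checkFun τ (Y ω)) ∂P) -
        ∫ ω, (checkFun τ (Y ω - b) - checkFun τ (Y ω)) ∂P := by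
  have hs : MeasurableSet {ω | Y ω ≤ b} := hY measurableSet_Iic
  have h_lower : ∫ ω, (τ * (b - a) - {ω | Y ω ≤ b}.indicator (fun _ => b - a) ω) ∂P =
      (τ - P.real {ω | Y ω ≤ b}) * (b - a) := by
    rw [integral_sub (integrable_const _) ((integrable_const _).indicator hs),
      integral_const, integral_indicator_const _ hs, probReal_univ, smul_eq_mul, smul_eq_mul]
    ring
  rw [← h_lower, ← integral_sub ha hb]
  refine integral_mono ((integrable_const _).sub ((integrable_const _).indicator hs))
    (ha.sub hb) fun ω => ?_
  have h := checkFun_sub_ge τ (Y ω - b) (Y ω - a)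
  simp only [sub_nonpos, sub_sub_sub_cancel_left] at h
  by_cases hω : Y ω ≤ b <;>
    simp only [Set.indicator, Set.mem_ofPred_eq, hω, if_true, if_false] at h ⊢ <;> linarith

lemma forall_le_iff_eq_of_subgradient {G F : ℝ → ℝ} {τ q : ℝ}
    (hG : ∀ a b, (τ - F b) * (b - a) ≤ G a - G b) (hF : ContinuousAt F q) :
    (∀ θ, G q ≤ G θ) ↔ F q = τ := by
  constructor
  · intro hmin
    have h_right : ∀ θ > q, τ ≤ F θ := fun θ hθ => by
      nlinarith [hG q θ, hmin θ]
    have h_left : ∀ θ < q, F θ ≤ τ := fun θ hθ => by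
      nlinarith [hG q θ, hmin θ]
    refine le_antisymm ?_ ?_
    · exact le_of_tendsto (hF.tendsto.mono_left (nhdsWithin_le_nhds (s := Set.Iio q)))
        (eventually_nhdsWithin_of_forall h_left)
    · exact ge_of_tendsto (hF.tendsto.mono_left (nhdsWithin_le_nhds (s := Set.Ioi q)))
        (eventually_nhdsWithin_of_forall h_right)
  · intro hq θ
    have := hG θ q
    rw [hq, sub_self, zero_mul] at this
    linarith

theorem quantile_minimizes_check_loss_general
    {Ω : Type*} [MeasurableSpace Ω] (P : Measure Ω) [IsProbabilityMeasure P]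
    (Y : Ω → ℝ) (hY : Measurable Y)
    (F : ℝ → ℝ) (hF : ∀ x, F x = (P {ω | Y ω ≤ x}).toReal)
    (hFcont : Continuous F)
    (τ : ℝ)
    (hInt : ∀ θ : ℝ, Integrable (fun ω => checkFun τ (Y ω - θ) - checkFun τ (Y ω)) P)
    (q : ℝ) :
    (∀ θ : ℝ,
        (∫ ω, (checkFun τ (Y ω - q) - checkFun τ (Y ω)) ∂P) ≤
          ∫ ω, (checkFun τ (Y ω - θ) - checkFun τ (Y ω)) ∂P) ↔ F q = τ := by
  refine forall_le_iff_eq_of_subgradient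
    (G := fun θ => ∫ ω, (checkFun τ (Y ω - θ) - checkFun τ (Y ω)) ∂P) (fun a b => ?_)
    hFcont.continuousAt
  rw [hF, ← measureReal_def]
  exact integral_checkFun_sub_ge P hY (hInt a) (hInt b)

/-- Let `Y` be a real random variable with continuous, strictly increasing CDF `F`, and
`τ ∈ (0,1)`.  Assuming the shifted losses `ρ_τ(Y − θ) − ρ_τ(Y)` are integrable, a point
`q` minimizes `θ ↦ E[ρ_τ(Y − θ) − ρ_τ(Y)]` over `ℝ` if and only if `F(q) = τ`. -/
theorem quantile_minimizes_check_loss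
    {Ω : Type*} [MeasurableSpace Ω] (P : Measure Ω) [IsProbabilityMeasure P]
    (Y : Ω → ℝ) (hY : Measurable Y)
    (F : ℝ → ℝ) (hF : ∀ x, F x = (P {ω | Y ω ≤ x}).toReal)
    (hFcont : Continuous F) (hFmono : StrictMono F)
    (τ : ℝ) (hτ : τ ∈ Set.Ioo (0 : ℝ) 1)
    (hInt : ∀ θ : ℝ, Integrable (fun ω => checkFun τ (Y ω - θ) - checkFun τ (Y ω)) P)
    (q : ℝ) :
    (∀ θ : ℝ,
        (∫ ω, (checkFun τ (Y ω - q) - checkFun τ (Y ω)) ∂P) ≤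
          ∫ ω, (checkFun τ (Y ω - θ) - checkFun τ (Y ω)) ∂P) ↔ F q = τ :=
  quantile_minimizes_check_loss_general P Y hY F hF hFcont τ hInt q
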